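/- Let H be a real n×n matrix with HᵀH = I, let μ > 0 and x ∈ ℝⁿ. Then the vector v = (x − N_μ(x))/μ is a subgradient of f_Haar at N_μ(x); that is, for every y ∈ ℝⁿ, ‖Hy‖₁ ≥ ‖H N_μ(x)‖₁ + ⟨v, y − N_μ(x)⟩. -/

import Mathlib

open Filter Topology Matrix

/-- The soft-thresholding operator with threshold `μ`. -/
noncomputable def softThresh {n : ℕ} (μ : ℝ) (v : EuclideanSpace ℝ (Fin n)) :
    EuclideanSpace ℝ (Fin n) :=
  WithLp.toLp 2 (fun i => if v i < -μ then v i + μ else if μ < v i then v i - μ else 0)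

/-- Multiplication of a Euclidean vector by a matrix. -/
noncomputable def matVec {n : ℕ} (H : Matrix (Fin n) (Fin n) ℝ)
    (x : EuclideanSpace ℝ (Fin n)) : EuclideanSpace ℝ (Fin n) :=
  (WithLp.equiv 2 (Fin n → ℝ)).symm (H.mulVec ((WithLp.equiv 2 (Fin n → ℝ)) x))

/-- The transformed soft-thresholding operator `N_μ(x) = Hᵀ ST_μ (H x)`. -/
noncomputable def haarProx {n : ℕ} (H : Matrix (Fin n) (Fin n) ℝ) (μ : ℝ)
    (x : EuclideanSpace ℝ (Fin n)) : EuclideanSpace ℝ (Fin n) :=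
  matVec Hᵀ (softThresh μ (matVec H x))

/-- The 1-norm of a vector. -/
noncomputable def norm1 {n : ℕ} (u : EuclideanSpace ℝ (Fin n)) : ℝ :=
  ∑ i, |u i|

/-! Since `H` is orthogonal, the substitution `u = H x`, `w = H y` preserves inner products and
turns `H N_μ(x)` into `ST_μ(u)`, so the claim becomes the subgradient inequality of `μ‖·‖₁` at
`ST_μ(u)`. That splits into one scalar inequality per coordinate: `uᵢ - ST_μ(u)ᵢ` equals
`μ · sign(ST_μ(u)ᵢ)` where `ST_μ(u)ᵢ ≠ 0`, and lies in `[-μ, μ]` where it vanishes. -/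

noncomputable def realSoftThresh (μ t : ℝ) : ℝ :=
  if t < -μ then t + μ else if μ < t then t - μ else 0

lemma mul_abs_realSoftThresh_add_le {μ : ℝ} (hμ : 0 ≤ μ) (u w : ℝ) :
    μ * |realSoftThresh μ u| + (u - realSoftThresh μ u) * (w - realSoftThresh μ u)
      ≤ μ * |w| := by
  unfold realSoftThresh
  split_ifs with hneg hpos
  · rw [abs_of_neg (by linarith)]
    nlinarith [mul_le_mul_of_nonneg_left (neg_abs_le w) hμ]
  · rw [abs_of_pos (by linarith)]
    nlinarith [mul_le_mul_of_nonneg_left (le_abs_self w) hμ]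
  · have hu : |u| ≤ μ := abs_le.2 ⟨not_lt.1 hneg, not_lt.1 hpos⟩
    calc μ * |0| + (u - 0) * (w - 0) = u * w := by simp
      _ ≤ |u| * |w| := by rw [← abs_mul]; exact le_abs_self _
      _ ≤ μ * |w| := by gcongr

section EuclideanSpace

variable {n : ℕ}

lemma softThresh_apply (μ : ℝ) (v : EuclideanSpace ℝ (Fin n)) (i : Fin n) :
    softThresh μ v i = realSoftThresh μ (v i) := rfl

lemma mul_norm1_softThresh_add_inner_le {μ : ℝ} (hμ : 0 ≤ μ) (v w : EuclideanSpace ℝ (Fin n)) :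
    μ * norm1 (softThresh μ v) + inner ℝ (v - softThresh μ v) (w - softThresh μ v)
      ≤ μ * norm1 w := by
  simp only [norm1, Finset.mul_sum, PiLp.inner_apply, ← Finset.sum_add_distrib]
  refine Finset.sum_le_sum fun i _ => ?_
  simpa [softThresh_apply, mul_comm (w i - _)] using
    mul_abs_realSoftThresh_add_le hμ (v i) (w i)

lemma matVec_eq_toEuclideanLin (A : Matrix (Fin n) (Fin n) ℝ) (x : EuclideanSpace ℝ (Fin n)) :
    matVec A x = A.toEuclideanLin x := rfl

lemma matVec_sub (A : Matrix (Fin n) (Fin n) ℝ) (x y : EuclideanSpace ℝ (Fin n)) :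
    matVec A (x - y) = matVec A x - matVec A y := by
  simp only [matVec_eq_toEuclideanLin, map_sub]

lemma matVec_matVec (A B : Matrix (Fin n) (Fin n) ℝ) (x : EuclideanSpace ℝ (Fin n)) :
    matVec A (matVec B x) = matVec (A * B) x := by
  simp [matVec, Matrix.mulVec_mulVec]

lemma matVec_one (x : EuclideanSpace ℝ (Fin n)) : matVec 1 x = x := by
  simp [matVec]

lemma inner_matVec_matVec {H : Matrix (Fin n) (Fin n) ℝ} (hH : Hᵀ * H = 1)
    (x y : EuclideanSpace ℝ (Fin n)) :
    inner ℝ (matVec H x) (matVec H y) = inner ℝ x y := by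
  rw [matVec_eq_toEuclideanLin H y, ← LinearMap.adjoint_inner_left,
    ← toEuclideanLin_conjTranspose_eq_adjoint, conjTranspose_eq_transpose_of_trivial,
    ← matVec_eq_toEuclideanLin, matVec_matVec, hH, matVec_one]

lemma matVec_haarProx {H : Matrix (Fin n) (Fin n) ℝ} (hH : Hᵀ * H = 1) (μ : ℝ)
    (x : EuclideanSpace ℝ (Fin n)) :
    matVec H (haarProx H μ x) = softThresh μ (matVec H x) := by
  rw [haarProx, matVec_matVec, mul_eq_one_comm.mp hH, matVec_one]

end EuclideanSpace

/-- `(x − N_μ(x))/μ` is a subgradient of `f_Haar = ‖H·‖₁` at `N_μ(x)`. -/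
theorem haar_soft_threshold_subgradient {n : ℕ}
    (H : Matrix (Fin n) (Fin n) ℝ) (hH : Hᵀ * H = 1)
    (μ : ℝ) (hμ : 0 < μ) (x : EuclideanSpace ℝ (Fin n)) :
    ∀ y : EuclideanSpace ℝ (Fin n),
      norm1 (matVec H y)
        ≥ norm1 (matVec H (haarProx H μ x))
          + inner ℝ (μ⁻¹ • (x - haarProx H μ x)) (y - haarProx H μ x) := by
  intro y
  have key := mul_norm1_softThresh_add_inner_le hμ.le (matVec H x) (matVec H y)
  rw [← matVec_haarProx hH, ← matVec_sub, ← matVec_sub, inner_matVec_matVec hH] at key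
  rw [ge_iff_le, real_inner_smul_left, ← mul_le_mul_iff_of_pos_left hμ, mul_add,
    mul_inv_cancel_left₀ hμ.ne']
  exact key
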